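/- Let S be a planar bi-modal hybrid automaton whose equilibrium x* is GAS for the mode-1 dynamics ẋ = f₁(x) and for S, satisfying Assumption 2, and let H ≥ 0. If T is a complete hybrid trajectory of the transition-delayed automaton S_H for which there exist a mode q∞ and a time t∞ such that q = q∞ for every (q, t, x) ∈ T with t > t∞, then the state of T converges to x* (in particular, every trajectory of S_H that does not converge to x* undergoes infinitely many mode transitions). -/

import Mathlib

open scoped RealInnerProductSpace
open Filter Topology

noncomputable section

/-- The planar state space ℝ². -/
abbrev State := EuclideanSpace ℝ (Fin 2)

/-- `φ` is the flow of the vector field `f` : `φ x 0 = x` and `∂φ(x,t)/∂t = f (φ x t)`. -/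
def IsFlow (f : State → State) (φ : State → ℝ → State) : Prop :=
  (∀ x, φ x 0 = x) ∧ ∀ x t, HasDerivAt (fun u => φ x u) (f (φ x t)) t

/-- The set of positive times at which the flow starting at `x` lies in `U`. -/
def hitTimes (φ : State → ℝ → State) (U : Set State) (x : State) : Set ℝ :=
  {t : ℝ | 0 < t ∧ φ x t ∈ U}

/-- The return time `τ_{f,U}(x)` is finite. -/
def hits (φ : State → ℝ → State) (U : Set State) (x : State) : Prop :=
  (hitTimes φ U x).Nonempty

/-- The return time `τ_{f,U}(x)` (a real number, junk value if the set is empty). -/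
def retTime (φ : State → ℝ → State) (U : Set State) (x : State) : ℝ :=
  sInf (hitTimes φ U x)

/-- The return time `τ_{f,U}(x)` as an extended real (`⊤` if the flow never returns to `U`). -/
def retTimeE (φ : State → ℝ → State) (U : Set State) (x : State) : EReal :=
  sInf (Real.toEReal '' hitTimes φ U x)

/-- The Poincaré map `P_{f,U}(x) = φ(x, τ_{f,U}(x))`. -/
def pMap (φ : State → ℝ → State) (U : Set State) (x : State) : State :=
  φ x (retTime φ U x)

/-- `y` is a globally asymptotically stable equilibrium for the flow `φ`. -/
def IsGASFlow (φ : State → ℝ → State) (y : State) : Prop :=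
  (∀ ε > 0, ∃ δ > 0, ∀ x : State, ‖x - y‖ < δ → ∀ t : ℝ, 0 ≤ t → ‖φ x t - y‖ < ε) ∧
  (∀ x : State, Tendsto (fun t => φ x t) atTop (𝓝 y))

/-- The two modes of a bi-modal hybrid automaton. -/
inductive Mode | one | two
deriving DecidableEq

/-- The other mode (target of the unique transition out of a mode). -/
def Mode.other : Mode → Mode
  | .one => .two
  | .two => .one

/-- A planar bi-modal hybrid automaton, with its two flows, and a unique
equilibrium `x*` of mode 1 lying in the interior of `Dom 1`. -/
structure BMHA where
  f1 : State → State
  f2 : State → State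
  g : State → ℝ
  φ1 : State → ℝ → State
  φ2 : State → ℝ → State
  lip1 : ∃ K, LipschitzWith K f1
  lip2 : ∃ K, LipschitzWith K f2
  g_smooth : ContDiff ℝ 1 g
  flow1 : IsFlow f1 φ1
  flow2 : IsFlow f2 φ2
  xstar : State
  equilibrium : f1 xstar = 0
  xstar_interior : g xstar < 0

/-- The vector field of each mode. -/
def BMHA.field (S : BMHA) : Mode → State → State
  | .one => S.f1
  | .two => S.f2

/-- The flow of each mode. -/
def BMHA.flow (S : BMHA) : Mode → State → ℝ → State
  | .one => S.φ1
  | .two => S.φ2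

/-- The domain of each mode: `Dom 1 = {g ≤ 0}`, `Dom 2 = {g ≥ 0}`. -/
def BMHA.Dom (S : BMHA) : Mode → Set State
  | .one => {x | S.g x ≤ 0}
  | .two => {x | 0 ≤ S.g x}

/-- The switching surface `G = {g = 0}`. -/
def BMHA.Gset (S : BMHA) : Set State := {x | S.g x = 0}

/-- The guard of the unique transition out of mode `q`:
`Guard (1→2) = {g ≥ 0}`, `Guard (2→1) = {g ≤ 0}`. -/
def BMHA.Guard (S : BMHA) : Mode → Set State
  | .one => {x | 0 ≤ S.g x}
  | .two => {x | S.g x ≤ 0}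

/-- A point of a hybrid trajectory: mode, time, state. -/
abbrev HPoint := Mode × ℝ × State

/-- The data of a (finite) hybrid trajectory of the transition-delayed automaton `S_H`:
times `t 0 < t 1 < ⋯ < t J`, modes `q j`, initial states `xs j` of each segment, and
delays `h j ∈ [0, H]`; on segment `j` the state follows the flow of mode `q j`, stays in
`Dom (q j)` until `t (j+1) - h j`, at which time it is in the guard of the transition
`(q j, q (j+1))`, and stays in that guard during the final `h j` time units, after which
the (identity-reset) transition to the alternate mode occurs. -/
structure TrajSpec (S : BMHA) (H : ℝ) where
  J : ℕ
  Jpos : 0 < J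
  t : ℕ → ℝ
  q : ℕ → Mode
  xs : ℕ → State
  h : ℕ → ℝ
  t_mono : ∀ j, j < J → t j < t (j + 1)
  h_nonneg : ∀ j, j + 1 < J → 0 ≤ h j
  h_le : ∀ j, j + 1 < J → h j ≤ H
  h_bound : ∀ j, j + 1 < J → t j ≤ t (j + 1) - h j
  alternate : ∀ j, j + 1 < J → q (j + 1) = (q j).other
  inDom : ∀ j, j + 1 < J → ∀ u ∈ Set.Icc (t j) (t (j + 1) - h j),
    S.flow (q j) (xs j) (u - t j) ∈ S.Dom (q j)
  inGuard : ∀ j, j + 1 < J → ∀ u ∈ Set.Icc (t (j + 1) - h j) (t (j + 1)),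
    S.flow (q j) (xs j) (u - t j) ∈ S.Guard (q j)
  reset : ∀ j, j + 1 < J → xs (j + 1) = S.flow (q j) (xs j) (t (j + 1) - t j)
  lastDom : ∀ u ∈ Set.Icc (t (J - 1)) (t J),
    S.flow (q (J - 1)) (xs (J - 1)) (u - t (J - 1)) ∈ S.Dom (q (J - 1))

/-- The hybrid trajectory (a subset of `Q × ℝ × ℝ²`) described by trajectory data. -/
def TrajSpec.toSet {S : BMHA} {H : ℝ} (D : TrajSpec S H) : Set HPoint :=
  {p | ∃ j < D.J, p.1 = D.q j ∧ p.2.1 ∈ Set.Icc (D.t j) (D.t (j + 1)) ∧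
    p.2.2 = S.flow (D.q j) (D.xs j) (p.2.1 - D.t j)}

/-- `T` is a hybrid trajectory of the transition-delayed automaton `S_H`. -/
def IsDelayedTraj (S : BMHA) (H : ℝ) (T : Set HPoint) : Prop :=
  ∃ D : TrajSpec S H, T = D.toSet

/-- The data of a complete (indefinitely extended) hybrid trajectory of `S_H`;
either infinitely many transitions (`J = ⊤`, with divergent transition times), or
finitely many, followed by a final segment defined for all subsequent times. -/
structure CTrajSpec (S : BMHA) (H : ℝ) where
  J : ℕ∞
  Jpos : 1 ≤ J
  t : ℕ → ℝ
  q : ℕ → Mode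
  xs : ℕ → State
  h : ℕ → ℝ
  t_mono : ∀ j : ℕ, ((j : ℕ∞) + 1) < J → t j < t (j + 1)
  h_nonneg : ∀ j : ℕ, ((j : ℕ∞) + 1) < J → 0 ≤ h j
  h_le : ∀ j : ℕ, ((j : ℕ∞) + 1) < J → h j ≤ H
  h_bound : ∀ j : ℕ, ((j : ℕ∞) + 1) < J → t j ≤ t (j + 1) - h j
  alternate : ∀ j : ℕ, ((j : ℕ∞) + 1) < J → q (j + 1) = (q j).other
  inDom : ∀ j : ℕ, ((j : ℕ∞) + 1) < J → ∀ u ∈ Set.Icc (t j) (t (j + 1) - h j),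
    S.flow (q j) (xs j) (u - t j) ∈ S.Dom (q j)
  inGuard : ∀ j : ℕ, ((j : ℕ∞) + 1) < J → ∀ u ∈ Set.Icc (t (j + 1) - h j) (t (j + 1)),
    S.flow (q j) (xs j) (u - t j) ∈ S.Guard (q j)
  reset : ∀ j : ℕ, ((j : ℕ∞) + 1) < J → xs (j + 1) = S.flow (q j) (xs j) (t (j + 1) - t j)
  nonZeno : J = ⊤ → Tendsto t atTop atTop
  lastDom : ∀ n : ℕ, J = (n : ℕ∞) + 1 → ∀ u : ℝ, t n ≤ u →
    S.flow (q n) (xs n) (u - t n) ∈ S.Dom (q n)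

/-- The set of (mode, time, state) points of a complete trajectory. -/
def CTrajSpec.toSet {S : BMHA} {H : ℝ} (D : CTrajSpec S H) : Set HPoint :=
  {p | ∃ j : ℕ, ((j : ℕ∞) + 1) ≤ D.J ∧ p.1 = D.q j ∧ D.t j ≤ p.2.1 ∧
    (((j : ℕ∞) + 1) < D.J → p.2.1 ≤ D.t (j + 1)) ∧
    p.2.2 = S.flow (D.q j) (D.xs j) (p.2.1 - D.t j)}

/-- The state along the complete trajectory converges to `y` as time tends to infinity. -/
def CTrajSpec.convergesTo {S : BMHA} {H : ℝ} (D : CTrajSpec S H) (y : State) : Prop :=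
  ∀ ε > 0, ∃ τ : ℝ, ∀ p ∈ D.toSet, τ ≤ p.2.1 → ‖p.2.2 - y‖ < ε

/-- `x*` is a globally asymptotically stable equilibrium of `S_H`: trajectories starting
near `x*` stay near `x*`, and every complete trajectory converges to `x*`. -/
def IsGAS (S : BMHA) (H : ℝ) : Prop :=
  (∀ ε > 0, ∃ δ > 0,
    (∀ D : TrajSpec S H, ‖D.xs 0 - S.xstar‖ < δ →
      ∀ p ∈ D.toSet, ‖p.2.2 - S.xstar‖ < ε) ∧
    (∀ D : CTrajSpec S H, ‖D.xs 0 - S.xstar‖ < δ →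
      ∀ p ∈ D.toSet, ‖p.2.2 - S.xstar‖ < ε)) ∧
  (∀ D : CTrajSpec S H, D.convergesTo S.xstar)

/-- A hybrid trajectory `T` is a closed orbit: there are `(q₀,t₀,x₀), (q̃,t̃,x̃), (q̄,t̄,x̄) ∈ T`
with `q̄ = q₀`, `t₀ < t̃ < t̄`, `x̃ ≠ x̄` and `x̄ = x₀`. -/
def IsClosedOrbit (T : Set HPoint) : Prop :=
  ∃ p0 pm pe : HPoint, p0 ∈ T ∧ pm ∈ T ∧ pe ∈ T ∧
    pe.1 = p0.1 ∧ p0.2.1 < pm.2.1 ∧ pm.2.1 < pe.2.1 ∧ pm.2.2 ≠ pe.2.2 ∧ pe.2.2 = p0.2.2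

/-- The transition-delayed automaton `S_H` admits a closed orbit. -/
def AdmitsClosedOrbit (S : BMHA) (H : ℝ) : Prop :=
  ∃ T : Set HPoint, IsDelayedTraj S H T ∧ IsClosedOrbit T

/-- `π(T)`: the set of states visited by the trajectory `T`. -/
def projT (T : Set HPoint) : Set State := {x | ∃ q t, (q, t, x) ∈ T}

/-- `T|_{[a,b]}`: restriction of the trajectory to a time interval. -/
def restr (T : Set HPoint) (a b : ℝ) : Set HPoint := {p ∈ T | a ≤ p.2.1 ∧ p.2.1 ≤ b}

/-- `T|_{[a,∞)}`: restriction of the trajectory to all times `≥ a`. -/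
def restrFrom (T : Set HPoint) (a : ℝ) : Set HPoint := {p ∈ T | a ≤ p.2.1}

/-- `τ_T(U, t₀) = inf {t | (q,t,x) ∈ T, t > t₀, x ∈ U}`. -/
def tauT (T : Set HPoint) (U : Set State) (t0 : ℝ) : ℝ :=
  sInf {t : ℝ | ∃ p ∈ T, p.2.1 = t ∧ t0 < t ∧ p.2.2 ∈ U}

/-- `P_T(U, t₀) = {(q,t,x) ∈ T | t = τ_T(U, t₀)}`: the first intersection of `T`
with `U` after time `t₀`. -/
def PT (T : Set HPoint) (U : Set State) (t0 : ℝ) : Set HPoint :=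
  {p ∈ T | p.2.1 = tauT T U t0}

/-- `[x,y]_X`: the union of all paths in `X` from `x` to `y`. -/
def pathsBetween (X : Set State) (x y : State) : Set State :=
  {z | ∃ γ : Path x y, (∀ u, γ u ∈ X) ∧ ∃ u, γ u = z}

/-- `U` is a path component of `X`. -/
def IsPathComponentOf (U X : Set State) : Prop :=
  ∃ x ∈ X, U = pathComponentIn X x

/-- The Poincaré curve `S_p = {x | s x = 0, ∇s(x)·f₁(x) > 0}` determined by `s`. -/
def PCurve (f1 : State → State) (s : State → ℝ) : Set State :=
  {x | s x = 0 ∧ 0 < ⟪gradient s x, f1 x⟫}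

/-- `s` defines a Poincaré curve for the field `f1`: `s` is continuously differentiable and
the curve is disjoint from the switching surface `{g = 0}`. -/
def IsPCurveFor (f1 : State → State) (g s : State → ℝ) : Prop :=
  ContDiff ℝ 1 s ∧ PCurve f1 s ∩ {x | g x = 0} = ∅

/-- Assumption 1: `S_p` has a single path component, `cl(S_p) = S_p ∪ {x*}`, and the
Euclidean norm restricted to `S_p` is injective. -/
def Assumption1 (f1 : State → State) (s : State → ℝ) (xstar : State) : Prop :=
  IsPathConnected (PCurve f1 s) ∧
  closure (PCurve f1 s) = PCurve f1 s ∪ {xstar} ∧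
  Set.InjOn (fun x : State => ‖x‖) (PCurve f1 s)

/-- `G̃ = {x ∈ G | ∇g(x)·f₂(x) < 0}`. -/
def BMHA.Gtilde (S : BMHA) : Set State :=
  {x | S.g x = 0 ∧ ⟪gradient S.g x, S.f2 x⟫ < 0}

/-- `T₂ = inf_{x ∈ G̃} τ_{f₂,S_p}(x)` (an extended real). -/
def T2 (S : BMHA) (s : State → ℝ) : EReal :=
  ⨅ x ∈ S.Gtilde, retTimeE S.φ2 (PCurve S.f1 s) x

/-- `D = {φ_{f₂}(x,h) | x ∈ G̃, 0 ≤ h < T₂}`. -/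
def Dset (S : BMHA) (s : State → ℝ) : Set State :=
  {y | ∃ x ∈ S.Gtilde, ∃ hd : ℝ, 0 ≤ hd ∧ (hd : EReal) < T2 S s ∧ y = S.φ2 x hd}

/-- Assumption 2: for every `x ∈ D`, `τ_{f₁,S_p}(x)` is finite and smaller
than `τ_{f₁,G}(x)`. -/
def Assumption2 (S : BMHA) (s : State → ℝ) : Prop :=
  ∀ x ∈ Dset S s, hits S.φ1 (PCurve S.f1 s) x ∧
    ((retTime S.φ1 (PCurve S.f1 s) x : EReal) < retTimeE S.φ1 S.Gset x)

/-- Assumption 3: for every `x` in the interior of `Dom 2`, the point `y = P_{f₂,G}(x)`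
is defined and satisfies `∇g(y)·f₂(y) ≠ 0`. -/
def Assumption3 (S : BMHA) : Prop :=
  ∀ x ∈ interior {y : State | 0 ≤ S.g y}, hits S.φ2 S.Gset x ∧
    ⟪gradient S.g (pMap S.φ2 S.Gset x), S.f2 (pMap S.φ2 S.Gset x)⟫ ≠ 0

/-- `S̃_p = {x ∈ S_p | τ_{f₁,G}(x) finite, ∇g(P_{f₁,G}(x))·f₁(P_{f₁,G}(x)) > 0}`. -/
def SpTilde (S : BMHA) (s : State → ℝ) : Set State :=
  {x ∈ PCurve S.f1 s | hits S.φ1 S.Gset x ∧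
    0 < ⟪gradient S.g (pMap S.φ1 S.Gset x), S.f1 (pMap S.φ1 S.Gset x)⟫}

/-- Assumption 4: for every `x ∈ S̃_p`, the point `y = P_{f₁,G}(x)` satisfies
`∇g(y)·f₁(y) ≠ 0`. -/
def Assumption4 (S : BMHA) (s : State → ℝ) : Prop :=
  ∀ x ∈ SpTilde S s,
    ⟪gradient S.g (pMap S.φ1 S.Gset x), S.f1 (pMap S.φ1 S.Gset x)⟫ ≠ 0

/-- The delayed Poincaré map `H^{h₁,h₂}(x₀) = P_{f₁,S_p}(x₄)` where
`x₁ = P_{f₁,G}(x₀)`, `x₂ = φ_{f₁}(x₁,h₁)`, `x₃ = P_{f₂,G}(x₂)`, `x₄ = φ_{f₂}(x₃,h₂)`. -/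
def dpm (S : BMHA) (s : State → ℝ) (h1 h2 : ℝ) (x0 : State) : State :=
  pMap S.φ1 (PCurve S.f1 s)
    (S.φ2 (pMap S.φ2 S.Gset (S.φ1 (pMap S.φ1 S.Gset x0) h1)) h2)

/-- The maximum stable delay `σ(S) = sup {H ≥ 0 | x* is a GAS equilibrium of S_H}`. -/
def sigmaMSD (S : BMHA) : EReal :=
  sSup (Real.toEReal '' {H : ℝ | 0 ≤ H ∧ IsGAS S H})

/-- `σ̂(S) = inf {H ≥ 0 | S_H admits a closed orbit}`. -/
def sigmaHat (S : BMHA) : EReal :=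
  sInf (Real.toEReal '' {H : ℝ | 0 ≤ H ∧ AdmitsClosedOrbit S H})

/-! Since the modes alternate at every transition, an eventually constant mode allows only
finitely many transitions: with infinitely many, the non-Zeno transition times would exceed any
`t∞` while the mode keeps changing. After the last transition the trajectory is a single flow
segment that never leaves its domain, i.e. a transition-free complete trajectory, which is a
trajectory of `S = S_0` as well; global asymptotic stability of `S` makes it converge to `x*`. -/

theorem Mode.other_ne (m : Mode) : m.other ≠ m := by
  cases m <;> simp [Mode.other]

namespace CTrajSpec

def ofFlow (S : BMHA) (H : ℝ) (q : Mode) (t₀ : ℝ) (x₀ : State)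
    (hDom : ∀ u : ℝ, t₀ ≤ u → S.flow q x₀ (u - t₀) ∈ S.Dom q) : CTrajSpec S H where
  J := 1
  Jpos := le_rfl
  t := fun _ => t₀
  q := fun _ => q
  xs := fun _ => x₀
  h := fun _ => 0
  t_mono := fun _ hj => absurd hj (not_lt.mpr le_add_self)
  h_nonneg := fun _ hj => absurd hj (not_lt.mpr le_add_self)
  h_le := fun _ hj => absurd hj (not_lt.mpr le_add_self)
  h_bound := fun _ hj => absurd hj (not_lt.mpr le_add_self)
  alternate := fun _ hj => absurd hj (not_lt.mpr le_add_self)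
  inDom := fun _ hj => absurd hj (not_lt.mpr le_add_self)
  inGuard := fun _ hj => absurd hj (not_lt.mpr le_add_self)
  reset := fun _ hj => absurd hj (not_lt.mpr le_add_self)
  nonZeno := fun h => absurd h ENat.one_ne_top
  lastDom := fun _ _ => hDom

variable {S : BMHA} {H : ℝ} (D : CTrajSpec S H) {n : ℕ}

theorem mem_ofFlow_toSet {q : Mode} {t₀ : ℝ} {x₀ : State}
    {hDom : ∀ u : ℝ, t₀ ≤ u → S.flow q x₀ (u - t₀) ∈ S.Dom q} {p : HPoint} :
    p ∈ (ofFlow S H q t₀ x₀ hDom).toSet ↔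
      p.1 = q ∧ t₀ ≤ p.2.1 ∧ p.2.2 = S.flow q x₀ (p.2.1 - t₀) := by
  constructor
  · rintro ⟨_, _, hq, ht, _, hx⟩
    exact ⟨hq, ht, hx⟩
  · rintro ⟨hq, ht, hx⟩
    exact ⟨0, by simp [ofFlow], hq, ht, fun h => absurd h (by simp [ofFlow]), hx⟩

theorem exists_J_eq_add_one_of_ne_top (hJ : D.J ≠ ⊤) :
    ∃ n : ℕ, D.J = n + 1 := by
  obtain ⟨m, hm⟩ := ENat.ne_top_iff_exists.1 hJ
  have hm1 : 1 ≤ m := by exact_mod_cast hm ▸ D.Jpos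
  exact ⟨m - 1, by rw [← hm]; exact_mod_cast (Nat.sub_add_cancel hm1).symm⟩

theorem transition_mem_toSet {j : ℕ} (hj : (j : ℕ∞) + 1 < D.J) :
    (D.q j, D.t (j + 1), S.flow (D.q j) (D.xs j) (D.t (j + 1) - D.t j)) ∈ D.toSet :=
  ⟨j, hj.le, rfl, (D.t_mono j hj).le, fun _ => le_rfl, rfl⟩

theorem J_ne_top_of_eventually_mode_eq {qinf : Mode} {tinf : ℝ}
    (hq : ∀ p ∈ D.toSet, tinf < p.2.1 → p.1 = qinf) : D.J ≠ ⊤ := by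
  intro hJ
  have hlt : ∀ j : ℕ, (j : ℕ∞) + 1 < D.J := fun j => by
    rw [hJ]; exact_mod_cast ENat.natCast_lt_top (j + 1)
  obtain ⟨N, hN⟩ := ((D.nonZeno hJ).eventually_gt_atTop tinf).exists_forall_of_atTop
  have hqN : D.q N = qinf := hq _ (D.transition_mem_toSet (hlt N)) (hN (N + 1) N.le_succ)
  have hqN' : D.q (N + 1) = qinf :=
    hq _ (D.transition_mem_toSet (hlt (N + 1))) (hN (N + 2) (by omega))
  have halt := D.alternate N (hlt N)
  rw [hqN, hqN'] at halt
  exact Mode.other_ne qinf halt.symm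

theorem t_mono_of_le {i j : ℕ} (hij : i ≤ j) (hj : (j : ℕ∞) < D.J) :
    D.t i ≤ D.t j := by
  induction j, hij using Nat.le_induction with
  | base => exact le_rfl
  | succ k _ ih =>
    have hk : (k : ℕ∞) + 1 < D.J := by exact_mod_cast hj
    exact (ih (lt_of_le_of_lt (by simp) hk)).trans (D.t_mono k hk).le

theorem mem_toSet_last_segment (hJ : D.J = n + 1) {p : HPoint} (hp : p ∈ D.toSet)
    (hpt : D.t n < p.2.1) :
    p.1 = D.q n ∧ D.t n ≤ p.2.1 ∧ p.2.2 = S.flow (D.q n) (D.xs n) (p.2.1 - D.t n) := by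
  obtain ⟨j, hjJ, hq, ht, hle, hx⟩ := hp
  rw [hJ] at hjJ hle
  have hjn : j ≤ n := Nat.succ_le_succ_iff.1 (by exact_mod_cast hjJ)
  obtain rfl | hjn := hjn.eq_or_lt
  · exact ⟨hq, ht, hx⟩
  · have hlast : D.t (j + 1) ≤ D.t n :=
      D.t_mono_of_le hjn (by rw [hJ]; exact_mod_cast n.lt_succ_self)
    linarith [hle (by exact_mod_cast Nat.succ_lt_succ hjn)]

def lastSegment (hJ : D.J = n + 1) (H' : ℝ) : CTrajSpec S H' :=
  ofFlow S H' (D.q n) (D.t n) (D.xs n) (D.lastDom n hJ)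

theorem convergesTo_of_lastSegment (hJ : D.J = n + 1) {H' : ℝ} {y : State}
    (hconv : (D.lastSegment hJ H').convergesTo y) : D.convergesTo y := by
  intro ε hε
  obtain ⟨τ, hτ⟩ := hconv ε hε
  refine ⟨max τ (D.t n + 1), fun p hp hpt => hτ p ?_ (le_of_max_le_left hpt)⟩
  have hpt' : D.t n < p.2.1 := by linarith [le_of_max_le_right hpt]
  exact mem_ofFlow_toSet.2 (D.mem_toSet_last_segment hJ hp hpt')

end CTrajSpec

theorem eventually_constant_mode_converges_general (S : BMHA)
    (hGASS : IsGAS S 0)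
    (H : ℝ) (D : CTrajSpec S H)
    (hq : ∃ qinf : Mode, ∃ tinf : ℝ, ∀ p ∈ D.toSet, tinf < p.2.1 → p.1 = qinf) :
    D.convergesTo S.xstar := by
  obtain ⟨qinf, tinf, hqinf⟩ := hq
  obtain ⟨n, hJ⟩ := D.exists_J_eq_add_one_of_ne_top (D.J_ne_top_of_eventually_mode_eq hqinf)
  exact D.convergesTo_of_lastSegment hJ (hGASS.2 (D.lastSegment hJ 0))

/-- a complete trajectory of `S_H` whose mode is eventually constant
converges to the equilibrium `x*`. -/
theorem eventually_constant_mode_converges (S : BMHA) (s : State → ℝ)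
    (hPC : IsPCurveFor S.f1 S.g s)
    (hGAS1 : IsGASFlow S.φ1 S.xstar) (hGASS : IsGAS S 0)
    (hA2 : Assumption2 S s)
    (H : ℝ) (hH : 0 ≤ H) (D : CTrajSpec S H)
    (hq : ∃ qinf : Mode, ∃ tinf : ℝ, ∀ p ∈ D.toSet, tinf < p.2.1 → p.1 = qinf) :
    D.convergesTo S.xstar :=
  eventually_constant_mode_converges_general S hGASS H D hq
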